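/- arXiv:1007.1615 — 3 statements merged into one kernel-verified Lean document; each statement's English description precedes it below -/
import Mathlib

section
/- Every tree T with maximum degree Δ satisfies lc(T) = ⌈Δ/2⌉ + 1. -/
open SimpleGraph Finset

/-- The subgraph of `G` induced by the union of the two color classes `a` and `b`
of the coloring `c` (as a spanning subgraph of `G`). -/
def pairGraph {V α : Type*} (G : SimpleGraph V) (c : V → α) (a b : α) : SimpleGraph V where
  Adj x y := G.Adj x y ∧ (c x = a ∨ c x = b) ∧ (c y = a ∨ c y = b)
  symm := ⟨fun x y h => ⟨h.1.symm, h.2.2, h.2.1⟩⟩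
  loopless := ⟨fun x h => G.loopless.irrefl x h.1⟩

/-- A graph has maximum degree at most two:  no vertex has three distinct neighbors. -/
def MaxDegLE2 {V : Type*} (H : SimpleGraph V) : Prop :=
  ∀ v x y z : V, H.Adj v x → H.Adj v y → H.Adj v z → x = y ∨ x = z ∨ y = z

/-- `c` is a linear coloring of `G`: a proper coloring in which the union of any
two color classes induces a linear forest (an acyclic graph of maximum degree at most two,
i.e. a disjoint union of paths). -/
def IsLinearColoring {V α : Type*} (G : SimpleGraph V) (c : V → α) : Prop :=
  (∀ ⦃x y⦄, G.Adj x y → c x ≠ c y) ∧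
  ∀ a b : α, (pairGraph G c a b).IsAcyclic ∧ MaxDegLE2 (pairGraph G c a b)

/-- The linear chromatic number `lc(G)`. -/
noncomputable def linChromNum {V : Type*} (G : SimpleGraph V) : ℕ :=
  sInf {n : ℕ | ∃ c : V → Fin n, IsLinearColoring G c}

/-- `G` is linearly `k`-choosable: from any lists of size at least `k` one can choose
a linear coloring. -/
def LinChoosable {V : Type*} (G : SimpleGraph V) (k : ℕ) : Prop :=
  ∀ L : V → Finset ℕ, (∀ v, k ≤ (L v).card) →
    ∃ c : V → ℕ, (∀ v, c v ∈ L v) ∧ IsLinearColoring G c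

/-- The linear list chromatic number `lc_ℓ(G)`. -/
noncomputable def linListChromNum {V : Type*} (G : SimpleGraph V) : ℕ :=
  sInf {k : ℕ | LinChoosable G k}

/-- `mad(G) ≤ q`: every nonempty subgraph has average degree at most `q`. -/
def MadLE {V : Type*} [Fintype V] (G : SimpleGraph V) (q : ℚ) : Prop :=
  ∀ H : G.Subgraph, H.verts.Nonempty →
    2 * (H.edgeSet.ncard : ℚ) ≤ q * (H.verts.ncard : ℚ)

/-- `mad(G) < q`: every nonempty subgraph has average degree less than `q`. -/
def MadLT {V : Type*} [Fintype V] (G : SimpleGraph V) (q : ℚ) : Prop :=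
  ∀ H : G.Subgraph, H.verts.Nonempty →
    2 * (H.edgeSet.ncard : ℚ) < q * (H.verts.ncard : ℚ)

/-- `mad(G) ≥ q`: some nonempty subgraph has average degree at least `q`. -/
def MadGE {V : Type*} [Fintype V] (G : SimpleGraph V) (q : ℚ) : Prop :=
  ∃ H : G.Subgraph, H.verts.Nonempty ∧ q * (H.verts.ncard : ℚ) ≤ 2 * (H.edgeSet.ncard : ℚ)

/-- `mad(G) = q`: the maximum average degree over nonempty subgraphs equals `q`. -/
def MadEq {V : Type*} [Fintype V] (G : SimpleGraph V) (q : ℚ) : Prop :=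
  MadLE G q ∧ ∃ H : G.Subgraph, H.verts.Nonempty ∧
    2 * (H.edgeSet.ncard : ℚ) = q * (H.verts.ncard : ℚ)

/-- `H` is a minor of `G`. -/
def IsMinorOf {W V : Type*} (H : SimpleGraph W) (G : SimpleGraph V) : Prop :=
  ∃ f : V → Option W,
    (∀ w : W, ∃ v : V, f v = some w) ∧
    (∀ w : W, (G.induce {v | f v = some w}).Connected) ∧
    (∀ w₁ w₂ : W, H.Adj w₁ w₂ →
      ∃ v₁ v₂ : V, f v₁ = some w₁ ∧ f v₂ = some w₂ ∧ G.Adj v₁ v₂)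

/-- Planarity, via Wagner's theorem: no `K₅` minor and no `K_{3,3}` minor. -/
def IsPlanar {V : Type*} (G : SimpleGraph V) : Prop :=
  ¬ IsMinorOf (⊤ : SimpleGraph (Fin 5)) G ∧
  ¬ IsMinorOf (completeBipartiteGraph (Fin 3) (Fin 3)) G

/-!
In a linear coloring a vertex of maximum degree `Δ` has no neighbour of its own color and at most
two of each other color, since two color classes induce paths; so `⌈Δ/2⌉ + 1` colors are needed.
Conversely, in a forest a proper coloring is linear as soon as no vertex has three neighbours of
one color, the pair graphs being acyclic anyway. Such a coloring with `⌈Δ/2⌉ + 1` colors is built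
inductively by removing a leaf `ℓ` with neighbour `u`: the at most `Δ - 1` other neighbours of
`u` are spread over the `⌈Δ/2⌉` colors different from that of `u`, so one of these occurs at
most once among them, and `ℓ` gets that color.
-/

namespace SimpleGraph

variable {V α : Type*} {G : SimpleGraph V} {c : V → α}

def IsTwoBoundedColoring (G : SimpleGraph V) (c : V → α) : Prop :=
  (∀ ⦃x y⦄, G.Adj x y → c x ≠ c y) ∧
  ∀ v x y z, G.Adj v x → G.Adj v y → G.Adj v z → c x = c y → c y = c z → x = y ∨ x = z ∨ y = z

theorem IsLinearColoring.isTwoBoundedColoring (hc : IsLinearColoring G c) :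
    IsTwoBoundedColoring G c := by
  refine ⟨hc.1, fun v x y z hx hy hz hxy hyz => ?_⟩
  exact (hc.2 (c v) (c x)).2 v x y z ⟨hx, .inl rfl, .inr rfl⟩ ⟨hy, .inl rfl, .inr hxy.symm⟩
    ⟨hz, .inl rfl, .inr (hxy.trans hyz).symm⟩

/-- In a pair graph all neighbours of `v` carry the one of the two colors that `v` lacks. -/
theorem IsTwoBoundedColoring.isLinearColoring (hG : G.IsAcyclic) (hc : IsTwoBoundedColoring G c) :
    IsLinearColoring G c := by
  refine ⟨hc.1, fun a b => ⟨hG.anti fun _ _ h => h.1, fun v x y z hx hy hz => ?_⟩⟩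
  have hx' := hc.1 hx.1
  have hy' := hc.1 hy.1
  have hz' := hc.1 hz.1
  exact hc.2 v x y z hx.1 hy.1 hz.1 (by grind [pairGraph]) (by grind [pairGraph])

theorem IsAcyclic.isLinearColoring_iff (hG : G.IsAcyclic) :
    IsLinearColoring G c ↔ IsTwoBoundedColoring G c :=
  ⟨IsLinearColoring.isTwoBoundedColoring, IsTwoBoundedColoring.isLinearColoring hG⟩

theorem IsTwoBoundedColoring.degree_le [Fintype α] [DecidableEq α] (hc : IsTwoBoundedColoring G c)
    (v : V) [Fintype (G.neighborSet v)] : G.degree v ≤ 2 * (Fintype.card α - 1) := by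
  have hmaps : ∀ w ∈ G.neighborFinset v, c w ∈ univ.erase (c v) := fun w hw =>
    mem_erase.2 ⟨(hc.1 ((G.mem_neighborFinset v w).1 hw)).symm, mem_univ _⟩
  have hfib : ∀ a ∈ univ.erase (c v), #{w ∈ G.neighborFinset v | c w = a} ≤ 2 := by
    intro a _
    by_contra! h
    obtain ⟨x, hx, y, hy, z, hz, hxy, hxz, hyz⟩ := two_lt_card.1 h
    simp only [mem_filter, mem_neighborFinset] at hx hy hz
    rcases hc.2 v x y z hx.1 hy.1 hz.1 (hx.2.trans hy.2.symm) (hy.2.trans hz.2.symm) with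
      h | h | h <;> contradiction
  calc G.degree v = #(G.neighborFinset v) := (card_neighborFinset_eq_degree G v).symm
    _ ≤ 2 * #(univ.erase (c v)) := card_le_mul_card_image_of_maps_to hmaps 2 hfib
    _ = 2 * (Fintype.card α - 1) := by rw [card_erase_of_mem (mem_univ _), card_univ]

theorem IsTwoBoundedColoring.update_of_leaf [DecidableEq V] {ℓ u : V} {a : α}
    (hℓ : ∀ w, G.Adj ℓ w ↔ w = u) (hc : IsTwoBoundedColoring (G.induce {ℓ}ᶜ) fun x => c x)
    (hau : a ≠ c u)
    (ha : ∀ x y, G.Adj u x → G.Adj u y → x ≠ ℓ → y ≠ ℓ → c x = a → c y = a → x = y) :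
    IsTwoBoundedColoring G (Function.update c ℓ a) := by
  have huℓ : u ≠ ℓ := ((hℓ u).2 rfl).ne'
  have hupd : ∀ w ≠ ℓ, Function.update c ℓ a w = c w := fun w hw => Function.update_of_ne hw ..
  constructor
  · intro x y hxy
    rcases eq_or_ne x ℓ with rfl | hx
    · rw [(hℓ y).1 hxy, Function.update_self, hupd u huℓ]
      exact hau
    rcases eq_or_ne y ℓ with rfl | hy
    · rw [(hℓ x).1 hxy.symm, Function.update_self, hupd u huℓ]
      exact hau.symm
    rw [hupd x hx, hupd y hy]
    exact @hc.1 ⟨x, hx⟩ ⟨y, hy⟩ hxy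
  · intro v x y z hx hy hz hxy hyz
    rcases eq_or_ne v ℓ with rfl | hv
    · exact .inl (((hℓ x).1 hx).trans ((hℓ y).1 hy).symm)
    by_cases hall : x ≠ ℓ ∧ y ≠ ℓ ∧ z ≠ ℓ
    · obtain ⟨hx', hy', hz'⟩ := hall
      simp only [hupd _ hx', hupd _ hy', hupd _ hz'] at hxy hyz
      simpa [Subtype.ext_iff] using hc.2 ⟨v, hv⟩ ⟨x, hx'⟩ ⟨y, hy'⟩ ⟨z, hz'⟩ hx hy hz hxy hyz
    have hvu : v = u := by
      have hℓ' : ∀ w, G.Adj w ℓ → w = u := fun w h => (hℓ w).1 h.symm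
      grind
    subst hvu
    -- one of `x, y, z` is `ℓ`, so the others have color `a`, and `ha` allows at most one of them
    grind

theorem IsTree.exists_isTwoBoundedColoring [Fintype V] {T : SimpleGraph V} [DecidableRel T.Adj]
    (hT : T.IsTree) {k : ℕ} (hdeg : ∀ v, T.degree v ≤ 2 * k) :
    ∃ c : V → Fin (k + 1), IsTwoBoundedColoring T c := by
  revert T
  refine Fintype.induction_subsingleton_or_nontrivial
    (P := fun V _ => ∀ {T : SimpleGraph V} [DecidableRel T.Adj], T.IsTree →
      (∀ v, T.degree v ≤ 2 * k) → ∃ c : V → Fin (k + 1), IsTwoBoundedColoring T c) V ?_ ?_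
  · intro W _ _ T _ hT hdeg
    exact ⟨fun _ => 0, fun x y h => (h.ne (Subsingleton.elim x y)).elim,
      fun v x _ _ h => (h.ne (Subsingleton.elim v x)).elim⟩
  · intro W _ _ ih T _ hT hdeg
    classical
    obtain ⟨ℓ, hℓ⟩ := hT.exists_vert_degree_one_of_nontrivial
    obtain ⟨u, hℓu, hu⟩ := degree_eq_one_iff_existsUnique_adj.1 hℓ
    have hT' : (T.induce {ℓ}ᶜ).IsTree :=
      ⟨hT.connected.induce_compl_singleton_of_degree_eq_one hℓ, hT.isAcyclic.induce _⟩
    obtain ⟨c', hc'⟩ := ih _ (Fintype.card_subtype_lt (x := ℓ) (by simp)) hT'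
      fun v => ((Copy.induce T _).degree_le v).trans (hdeg v)
    let c : W → Fin (k + 1) := fun v => if h : v = ℓ then 0 else c' ⟨v, h⟩
    have hcc' : (fun x : ({ℓ}ᶜ : Set W) => c x) = c' := funext fun x => dif_neg x.2
    have hA : #((T.neighborFinset u).erase ℓ) < #(univ.erase (c u)) * 2 := by
      have hdu := hdeg u
      have hpos : 0 < T.degree u := T.degree_pos_iff_exists_adj u |>.2 ⟨ℓ, hℓu.symm⟩
      rw [card_erase_of_mem (by simpa using hℓu.symm), card_erase_of_mem (mem_univ _), card_univ,
        Fintype.card_fin, card_neighborFinset_eq_degree]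
      omega
    obtain ⟨a, ha, hfib⟩ := exists_card_fiber_lt_of_card_lt_mul (f := c) hA
    refine ⟨Function.update c ℓ a, (hcc' ▸ hc').update_of_leaf (fun w => ⟨hu w, (· ▸ hℓu)⟩)
      (mem_erase.1 ha).1 fun x y hx hy hxℓ hyℓ hxa hya => ?_⟩
    exact card_le_one.1 (Nat.lt_succ_iff.1 hfib) x (by simp [*]) y (by simp [*])

end SimpleGraph

/-- Every tree `T` with maximum degree `Δ` satisfies `lc(T) = ⌈Δ/2⌉ + 1`. -/
theorem linChromNum_tree {V : Type*} [Fintype V] (T : SimpleGraph V) [DecidableRel T.Adj]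
    (hT : T.IsTree) :
    linChromNum T = (T.maxDegree + 1) / 2 + 1 := by
  set k := (T.maxDegree + 1) / 2
  obtain ⟨c, hc⟩ := hT.exists_isTwoBoundedColoring (k := k) fun v =>
    (T.degree_le_maxDegree v).trans (by omega)
  have hlin : IsLinearColoring T c := hT.isAcyclic.isLinearColoring_iff.2 hc
  refine le_antisymm (Nat.sInf_le ⟨c, hlin⟩) (le_csInf ⟨_, c, hlin⟩ ?_)
  rintro n ⟨c', hc'⟩
  have hn : 0 < n := (c' hT.connected.nonempty.some).pos
  have hdeg := T.maxDegree_le_of_forall_degree_le _ fun v => hc'.isTwoBoundedColoring.degree_le v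
  rw [Fintype.card_fin] at hdeg
  omega
end

section
/- If G is a graph with mad(G) < 3, minimum degree δ(G) ≥ 2, and Δ(G) ≥ 9, then G contains one of: (RC1) a 2-vertex u with neighbors v, w such that ⌈d(v)/2⌉ + ⌈d(w)/2⌉ < ⌈Δ(G)/2⌉ + 2; (RC2) a 3-vertex adjacent to a 2-vertex and to two other vertices v, w with d(v) + d(w) ≤ 8; (RC3) a 3-vertex adjacent to two 2-vertices; (RC4) a 4-vertex adjacent to four 2-vertices; (RC5) a 5-vertex u adjacent to four 2-vertices, each of which has its other neighbor of degree at most 8, with u also adjacent to a fifth vertex of degree at most 3. -/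
open SimpleGraph Finset

section Configs

variable {V : Type*} [Fintype V] (G : SimpleGraph V) [DecidableRel G.Adj]

/-- (RC1) a `2`-vertex `u` with neighbors `v, w` such that
`⌈d(v)/2⌉ + ⌈d(w)/2⌉ < ⌈Δ(G)/2⌉ + 2`. -/
def ConfigRC1 : Prop :=
  ∃ u v w : V, v ≠ w ∧ G.Adj u v ∧ G.Adj u w ∧ G.degree u = 2 ∧
    (G.degree v + 1) / 2 + (G.degree w + 1) / 2 < (G.maxDegree + 1) / 2 + 2

/-- (RC2) a `3`-vertex adjacent to a `2`-vertex and to two other vertices `v, w`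
with `d(v) + d(w) ≤ 8`. -/
def ConfigRC2 : Prop :=
  ∃ u x v w : V, x ≠ v ∧ x ≠ w ∧ v ≠ w ∧ G.Adj u x ∧ G.Adj u v ∧ G.Adj u w ∧
    G.degree u = 3 ∧ G.degree x = 2 ∧ G.degree v + G.degree w ≤ 8

/-- (RC3) a `3`-vertex adjacent to two `2`-vertices. -/
def ConfigRC3 : Prop :=
  ∃ u v w : V, v ≠ w ∧ G.Adj u v ∧ G.Adj u w ∧ G.degree u = 3 ∧
    G.degree v = 2 ∧ G.degree w = 2

/-- (RC4) a `4`-vertex adjacent to four `2`-vertices. -/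
def ConfigRC4 : Prop :=
  ∃ u v₁ v₂ v₃ v₄ : V, [v₁, v₂, v₃, v₄].Nodup ∧ G.degree u = 4 ∧
    G.Adj u v₁ ∧ G.Adj u v₂ ∧ G.Adj u v₃ ∧ G.Adj u v₄ ∧
    G.degree v₁ = 2 ∧ G.degree v₂ = 2 ∧ G.degree v₃ = 2 ∧ G.degree v₄ = 2

/-- (RC5) a `5`-vertex `u` adjacent to four `2`-vertices, each of whose other neighbor has
degree at most `8`, with `u` also adjacent to a fifth vertex of degree at most `3`. -/
def ConfigRC5 : Prop :=
  ∃ u v₁ v₂ v₃ v₄ v₅ : V, [v₁, v₂, v₃, v₄, v₅].Nodup ∧ G.degree u = 5 ∧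
    G.Adj u v₁ ∧ G.Adj u v₂ ∧ G.Adj u v₃ ∧ G.Adj u v₄ ∧ G.Adj u v₅ ∧
    G.degree v₁ = 2 ∧ G.degree v₂ = 2 ∧ G.degree v₃ = 2 ∧ G.degree v₄ = 2 ∧
    (∀ v ∈ [v₁, v₂, v₃, v₄], ∀ w : V, G.Adj v w → w ≠ u → G.degree w ≤ 8) ∧
    G.degree v₅ ≤ 3

end Configs


/-!
Discharging. Each vertex `v` starts with charge `d(v) - 3`, so `mad(G) < 3` makes the total
charge negative. A vertex of degree `a ≥ 3` sends to each adjacent `2`-vertex whose other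
neighbour has degree `b` the amount `twoVertexShare a b`, and a vertex of degree at least `5`
sends `1/3` to each adjacent `3`-vertex having a `2`-neighbour. The absence of (RC1) is exactly
what guarantees that a `2`-vertex receives at least `1` from its two neighbours; the absence of
(RC2)–(RC5) keeps the charge of the `3`-, `4`- and `5`-vertices nonnegative, and larger degrees
can afford their gifts outright. So every final charge is nonnegative, while their sum is the
(negative) initial total.
-/

theorem Finset.sum_add_sum_sub_sum {ι M : Type*} [Fintype ι] [AddCommGroup M] (c : ι → M)
    (f : ι → ι → M) : ∑ v, (c v + ∑ x, f x v - ∑ x, f v x) = ∑ v, c v := by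
  rw [sum_sub_distrib, sum_add_distrib, sum_comm (f := f), add_sub_cancel_right]

theorem sum_degree_sub_three_neg {V : Type*} [Fintype V] [Nonempty V] (G : SimpleGraph V)
    [DecidableRel G.Adj] (hmad : MadLT G 3) : ∑ v, ((G.degree v : ℚ) - 3) < 0 := by
  have htop := hmad ⊤ (by simp)
  rw [Subgraph.edgeSet_top, Subgraph.verts_top, Set.ncard_univ, Nat.card_eq_fintype_card,
    ← G.coe_edgeFinset, Set.ncard_coe_finset] at htop
  have hsum : ∑ v, (G.degree v : ℚ) = 2 * #G.edgeFinset := by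
    exact_mod_cast G.sum_degrees_eq_twice_card_edges
  rw [sum_sub_distrib, hsum, sum_const, card_univ, nsmul_eq_mul]
  linarith

def twoVertexShare (a b : ℕ) : ℚ :=
  if a ≤ 2 then 0
  else if a ≤ 4 then 1/3
  else if a = 5 then (if b ≤ 8 then 3/7 else 1/3)
  else if a = 6 then 1/2
  else if a ≤ 8 then (if b = 5 then 4/7 else 1/2)
  else (if b ≤ 5 then 2/3 else 1/2)

lemma twoVertexShare_nonneg (a b : ℕ) : 0 ≤ twoVertexShare a b := by
  unfold twoVertexShare; split_ifs <;> norm_num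

lemma twoVertexShare_le_two_thirds (a b : ℕ) : twoVertexShare a b ≤ 2/3 := by
  unfold twoVertexShare; split_ifs <;> norm_num

lemma one_le_twoVertexShare_add {Δ a b : ℕ} (hΔ : 9 ≤ Δ) (ha : a ≤ Δ) (hb : b ≤ Δ)
    (h : (Δ + 1) / 2 + 2 ≤ (a + 1) / 2 + (b + 1) / 2) :
    1 ≤ twoVertexShare a b + twoVertexShare b a := by
  unfold twoVertexShare
  split_ifs <;> first | omega | norm_num

section Discharging

variable {V : Type*} [Fintype V] [DecidableEq V] (G : SimpleGraph V) [DecidableRel G.Adj]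

/-- For a `2`-vertex `u` adjacent to `v`, the degree of the other neighbour of `u`. -/
def otherNeighborDeg (v u : V) : ℕ := ∑ w ∈ (G.neighborFinset u).erase v, G.degree w

def IsWeakThreeVertex (u : V) : Prop := G.degree u = 3 ∧ ∃ w, G.Adj u w ∧ G.degree w = 2

open Classical in
noncomputable def transfer (v u : V) : ℚ :=
  if G.Adj v u then
    if G.degree u = 2 then twoVertexShare (G.degree v) (otherNeighborDeg G v u)
    else if IsWeakThreeVertex G u ∧ 5 ≤ G.degree v then 1/3 else 0
  else 0

noncomputable def finalCharge (v : V) : ℚ :=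
  G.degree v - 3 + ∑ x, transfer G x v - ∑ x, transfer G v x

lemma sum_finalCharge : ∑ v, finalCharge G v = ∑ v, ((G.degree v : ℚ) - 3) :=
  sum_add_sum_sub_sum _ _

variable {G}

lemma exists_neighborFinset_eq_pair {u v : V} (hu : G.degree u = 2) (huv : G.Adj u v) :
    ∃ w, w ≠ v ∧ G.neighborFinset u = {v, w} := by
  obtain ⟨x, y, hxy, hN⟩ := card_eq_two.1 (G.card_neighborFinset_eq_degree u ▸ hu)
  have hv : v ∈ G.neighborFinset u := (G.mem_neighborFinset u v).2 huv
  rw [hN, mem_insert, mem_singleton] at hv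
  rcases hv with rfl | rfl
  · exact ⟨y, hxy.symm, hN⟩
  · exact ⟨x, hxy, hN.trans (pair_comm _ _)⟩

lemma degree_le_otherNeighborDeg {u v w : V} (huw : G.Adj u w) (hwv : w ≠ v) :
    G.degree w ≤ otherNeighborDeg G v u :=
  single_le_sum (f := fun x => G.degree x) (fun _ _ => Nat.zero_le _)
    (mem_erase.2 ⟨hwv, (G.mem_neighborFinset u w).2 huw⟩)

lemma transfer_nonneg (v u : V) : 0 ≤ transfer G v u := by
  unfold transfer; split_ifs <;> first | exact twoVertexShare_nonneg _ _ | norm_num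

lemma transfer_of_not_adj {v u : V} (h : ¬ G.Adj v u) : transfer G v u = 0 := by
  rw [transfer, if_neg h]

lemma transfer_of_degree_le_two {v : V} (h : G.degree v ≤ 2) (u : V) : transfer G v u = 0 := by
  unfold transfer twoVertexShare; split_ifs <;> first | rfl | omega

lemma transfer_of_degree_eq_two {v u : V} (hvu : G.Adj v u) (hu : G.degree u = 2) :
    transfer G v u = twoVertexShare (G.degree v) (otherNeighborDeg G v u) := by
  rw [transfer, if_pos hvu, if_pos hu]

lemma transfer_of_isWeakThreeVertex {v u : V} (hu : IsWeakThreeVertex G u) (hvu : G.Adj v u)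
    (hv : 5 ≤ G.degree v) : transfer G v u = 1/3 := by
  rw [transfer, if_pos hvu, if_neg (by rw [hu.1]; omega), if_pos ⟨hu, hv⟩]

lemma adj_and_degree_le_three_of_transfer_ne_zero {v u : V} (h : transfer G v u ≠ 0) :
    G.Adj v u ∧ G.degree u ≤ 3 := by
  unfold transfer at h
  split_ifs at h with hvu hu hw
  · exact ⟨hvu, hu.le.trans (by norm_num)⟩
  · exact ⟨hvu, hw.1.1.le⟩
  all_goals exact absurd rfl h

lemma transfer_of_three_le_degree_le_four {v : V} (h3 : 3 ≤ G.degree v) (h4 : G.degree v ≤ 4)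
    (u : V) : transfer G v u = if G.Adj v u ∧ G.degree u = 2 then 1/3 else 0 := by
  unfold transfer twoVertexShare IsWeakThreeVertex
  split_ifs <;> first | rfl | omega | tauto

lemma transfer_le_of_degree_eq_five {v : V} (hv : G.degree v = 5) (u : V) :
    transfer G v u ≤ 3/7 := by
  unfold transfer twoVertexShare; split_ifs <;> first | omega | norm_num

lemma transfer_le_one_third_of_degree_eq_five {v u : V} (hv : G.degree v = 5)
    (hu : ¬ (G.degree u = 2 ∧ otherNeighborDeg G v u ≤ 8)) : transfer G v u ≤ 1/3 := by
  unfold transfer twoVertexShare; split_ifs <;> first | omega | norm_num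

lemma transfer_le_of_degree_eq_six {v : V} (hv : G.degree v = 6) (u : V) :
    transfer G v u ≤ 1/2 := by
  unfold transfer twoVertexShare; split_ifs <;> first | omega | norm_num

lemma transfer_le_of_seven_le_degree_le_eight {v : V} (h7 : 7 ≤ G.degree v)
    (h8 : G.degree v ≤ 8) (u : V) : transfer G v u ≤ 4/7 := by
  unfold transfer twoVertexShare; split_ifs <;> first | omega | norm_num

lemma transfer_le_two_thirds (v u : V) : transfer G v u ≤ 2/3 := by
  unfold transfer; split_ifs <;> first | exact twoVertexShare_le_two_thirds _ _ | norm_num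

lemma sum_transfer_eq_sum_neighborFinset (v : V) :
    ∑ u, transfer G v u = ∑ u ∈ G.neighborFinset v, transfer G v u :=
  (sum_subset (subset_univ _) fun _ _ hu =>
    transfer_of_not_adj fun h => hu ((G.mem_neighborFinset _ _).2 h)).symm

lemma sum_transfer_le_degree_mul {v : V} {C : ℚ} (hC : ∀ u, transfer G v u ≤ C) :
    ∑ u, transfer G v u ≤ G.degree v * C := by
  rw [sum_transfer_eq_sum_neighborFinset, ← card_neighborFinset_eq_degree, ← nsmul_eq_mul]
  exact sum_le_card_nsmul _ _ _ fun u _ => hC u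

lemma sum_transfer_of_three_le_degree_le_four {v : V} (h3 : 3 ≤ G.degree v)
    (h4 : G.degree v ≤ 4) :
    ∑ u, transfer G v u = #{u | G.Adj v u ∧ G.degree u = 2} * (1/3 : ℚ) := by
  simp_rw [transfer_of_three_le_degree_le_four h3 h4, ← sum_filter, sum_const, nsmul_eq_mul]

lemma finalCharge_nonneg_of_sum_transfer_le {v : V}
    (h : ∑ u, transfer G v u ≤ G.degree v - 3) : 0 ≤ finalCharge G v := by
  have : 0 ≤ ∑ u, transfer G u v := sum_nonneg fun u _ => transfer_nonneg u v
  unfold finalCharge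
  linarith

lemma finalCharge_nonneg_of_degree_eq_two (hR1 : ¬ ConfigRC1 G) (hΔ : 9 ≤ G.maxDegree) {u : V}
    (hu : G.degree u = 2) : 0 ≤ finalCharge G u := by
  obtain ⟨v, huv⟩ := (G.degree_pos_iff_exists_adj u).1 (by omega)
  obtain ⟨w, hwv, hN⟩ := exists_neighborFinset_eq_pair hu huv
  have huw : G.Adj u w := (G.mem_neighborFinset u w).1 (by simp [hN])
  have hv : otherNeighborDeg G v u = G.degree w := by simp [otherNeighborDeg, hN, hwv.symm]
  have hw : otherNeighborDeg G w u = G.degree v := by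
    simp [otherNeighborDeg, hN, pair_comm v w, hwv]
  have hshare : 1 ≤ transfer G v u + transfer G w u := by
    rw [transfer_of_degree_eq_two huv.symm hu, transfer_of_degree_eq_two huw.symm hu, hv, hw]
    refine one_le_twoVertexShare_add hΔ (G.degree_le_maxDegree v) (G.degree_le_maxDegree w) ?_
    by_contra! h
    exact hR1 ⟨u, v, w, hwv.symm, huv, huw, hu, h⟩
  have hin : transfer G v u + transfer G w u ≤ ∑ x, transfer G x u := by
    rw [← sum_pair (f := fun x => transfer G x u) hwv.symm]
    exact sum_le_sum_of_subset_of_nonneg (subset_univ _) fun x _ _ => transfer_nonneg x u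
  have hout : ∑ x, transfer G u x = 0 := sum_eq_zero fun x _ => transfer_of_degree_le_two hu.le x
  rw [finalCharge, hu, hout]
  push_cast
  linarith

lemma exists_adj_five_le_degree_of_isWeakThreeVertex (hR2 : ¬ ConfigRC2 G) {v : V}
    (hv : IsWeakThreeVertex G v) : ∃ y, G.Adj v y ∧ 5 ≤ G.degree y := by
  obtain ⟨hv3, x, hvx, hx2⟩ := hv
  have hx : x ∈ G.neighborFinset v := (G.mem_neighborFinset v x).2 hvx
  obtain ⟨y, z, hyz, hN⟩ := card_eq_two.1 <| by
    rw [card_erase_of_mem hx, card_neighborFinset_eq_degree, hv3]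
  have hy : y ∈ (G.neighborFinset v).erase x := by simp [hN]
  have hz : z ∈ (G.neighborFinset v).erase x := by simp [hN]
  rw [mem_erase, mem_neighborFinset] at hy hz
  by_contra! h
  exact hR2 ⟨v, x, y, z, hy.1.symm, hz.1.symm, hyz, hvx, hy.2, hz.2, hv3, hx2,
    by linarith [h y hy.2, h z hz.2]⟩

lemma finalCharge_nonneg_of_degree_eq_three (hR2 : ¬ ConfigRC2 G) (hR3 : ¬ ConfigRC3 G) {v : V}
    (hv : G.degree v = 3) : 0 ≤ finalCharge G v := by
  have hout := sum_transfer_of_three_le_degree_le_four (G := G) (v := v) (by omega) (by omega)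
  obtain hS | ⟨x, hx⟩ := eq_empty_or_nonempty {u | G.Adj v u ∧ G.degree u = 2}
  · apply finalCharge_nonneg_of_sum_transfer_le
    rw [hout, hS, hv]
    norm_num
  have hS : #{u | G.Adj v u ∧ G.degree u = 2} ≤ 1 := by
    refine card_le_one.2 fun a ha b hb => ?_
    by_contra hab
    simp only [mem_filter, mem_univ, true_and] at ha hb
    exact hR3 ⟨v, a, b, hab, ha.1, hb.1, hv, ha.2, hb.2⟩
  simp only [mem_filter, mem_univ, true_and] at hx
  obtain ⟨y, hvy, hy⟩ := exists_adj_five_le_degree_of_isWeakThreeVertex hR2 ⟨hv, x, hx⟩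
  have hin : 1/3 ≤ ∑ u, transfer G u v := by
    rw [← transfer_of_isWeakThreeVertex ⟨hv, x, hx⟩ hvy.symm hy]
    exact single_le_sum (fun u _ => transfer_nonneg u v) (mem_univ y)
  have hS' : (#{u | G.Adj v u ∧ G.degree u = 2} : ℚ) ≤ 1 := by exact_mod_cast hS
  rw [finalCharge, hout, hv]
  push_cast
  linarith

lemma finalCharge_nonneg_of_degree_eq_four (hR4 : ¬ ConfigRC4 G) {v : V} (hv : G.degree v = 4) :
    0 ≤ finalCharge G v := by
  have hS : #{u | G.Adj v u ∧ G.degree u = 2} ≤ 3 := by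
    by_contra! h
    obtain ⟨T, hT, hT4⟩ := exists_subset_card_eq h
    obtain ⟨a, b, c, d, hab, hac, had, hbc, hbd, hcd, rfl⟩ := card_eq_four.1 hT4
    simp only [insert_subset_iff, singleton_subset_iff, mem_filter, mem_univ, true_and] at hT
    obtain ⟨⟨ha, ha2⟩, ⟨hb, hb2⟩, ⟨hc, hc2⟩, ⟨hd, hd2⟩⟩ := hT
    exact hR4 ⟨v, a, b, c, d, by simp [*], hv, ha, hb, hc, hd, ha2, hb2, hc2, hd2⟩
  have hS' : (#{u | G.Adj v u ∧ G.degree u = 2} : ℚ) ≤ 3 := by exact_mod_cast hS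
  apply finalCharge_nonneg_of_sum_transfer_le
  rw [sum_transfer_of_three_le_degree_le_four (by omega) (by omega), hv]
  push_cast
  linarith

lemma transfer_eq_zero_of_notMem_four_light (hR5 : ¬ ConfigRC5 G) {v : V} (hv : G.degree v = 5)
    {T : Finset V} (hT : #T = 4)
    (hTv : ∀ x ∈ T, G.Adj v x ∧ G.degree x = 2 ∧ otherNeighborDeg G v x ≤ 8) {u : V}
    (hu : u ∉ T) : transfer G v u = 0 := by
  by_contra hne
  obtain ⟨hvu, hu3⟩ := adj_and_degree_le_three_of_transfer_ne_zero hne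
  obtain ⟨a, b, c, d, hab, hac, had, hbc, hbd, hcd, rfl⟩ := card_eq_four.1 hT
  simp only [mem_insert, mem_singleton, forall_eq_or_imp, forall_eq, not_or] at hTv hu
  obtain ⟨⟨ha, ha2, ha8⟩, ⟨hb, hb2, hb8⟩, ⟨hc, hc2, hc8⟩, ⟨hd, hd2, hd8⟩⟩ := hTv
  refine hR5 ⟨v, a, b, c, d, u, ?_, hv, ha, hb, hc, hd, hvu, ha2, hb2, hc2, hd2, ?_, hu3⟩
  · simp [*, Ne.symm hu.1, Ne.symm hu.2.1, Ne.symm hu.2.2.1, Ne.symm hu.2.2.2]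
  · simp only [List.mem_cons, List.not_mem_nil, or_false]
    rintro x (rfl | rfl | rfl | rfl) w hxw hwv <;>
      exact (degree_le_otherNeighborDeg hxw hwv).trans ‹_›

/- Only the "light" `2`-neighbours `L` can receive more than `1/3`; once four of them are present,
the absence of (RC5) means the fifth neighbour receives nothing. -/
lemma sum_transfer_le_two_of_degree_eq_five (hR5 : ¬ ConfigRC5 G) {v : V}
    (hv : G.degree v = 5) : ∑ u, transfer G v u ≤ 2 := by
  rw [sum_transfer_eq_sum_neighborFinset]
  set L := (G.neighborFinset v).filter (fun u => G.degree u = 2 ∧ otherNeighborDeg G v u ≤ 8)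
  by_cases hL : #L ≤ 3
  · have hL' : (#L : ℚ) ≤ 3 := by exact_mod_cast hL
    calc ∑ u ∈ G.neighborFinset v, transfer G v u
        ≤ ∑ u ∈ G.neighborFinset v, (1/3 + if u ∈ L then 2/21 else 0) := by
          refine sum_le_sum fun u hu => ?_
          by_cases huL : u ∈ L
          · rw [if_pos huL]
            linarith [transfer_le_of_degree_eq_five hv u]
          · rw [if_neg huL, add_zero]
            exact transfer_le_one_third_of_degree_eq_five hv fun h => huL (mem_filter.2 ⟨hu, h⟩)
      _ = 5 * (1/3) + #L * (2/21) := by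
          rw [sum_add_distrib, sum_const, card_neighborFinset_eq_degree, hv, sum_ite_mem,
            inter_eq_right.2 (show L ⊆ _ from filter_subset _ _), sum_const, nsmul_eq_mul,
            nsmul_eq_mul]
          norm_num
      _ ≤ 2 := by linarith
  · obtain ⟨T, hTL, hT⟩ := exists_subset_card_eq (show 4 ≤ #L by omega)
    have hTv : ∀ x ∈ T, G.Adj v x ∧ G.degree x = 2 ∧ otherNeighborDeg G v x ≤ 8 := by
      intro x hx
      have := mem_filter.1 (hTL hx)
      exact ⟨(G.mem_neighborFinset v x).1 this.1, this.2⟩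
    calc ∑ u ∈ G.neighborFinset v, transfer G v u = ∑ u ∈ T, transfer G v u :=
          (sum_subset (hTL.trans (filter_subset _ _)) fun u _ hu =>
            transfer_eq_zero_of_notMem_four_light hR5 hv hT hTv hu).symm
      _ ≤ #T • (3/7 : ℚ) :=
          sum_le_card_nsmul _ _ _ fun u _ => transfer_le_of_degree_eq_five hv u
      _ ≤ 2 := by rw [hT]; norm_num

lemma finalCharge_nonneg_of_degree_eq_five (hR5 : ¬ ConfigRC5 G) {v : V} (hv : G.degree v = 5) :
    0 ≤ finalCharge G v := by
  apply finalCharge_nonneg_of_sum_transfer_le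
  exact (sum_transfer_le_two_of_degree_eq_five hR5 hv).trans (by rw [hv]; norm_num)

lemma finalCharge_nonneg_of_six_le_degree {v : V} (hv : 6 ≤ G.degree v) :
    0 ≤ finalCharge G v := by
  apply finalCharge_nonneg_of_sum_transfer_le
  obtain h6 | ⟨h7, h8⟩ | h9 : G.degree v = 6 ∨ (7 ≤ G.degree v ∧ G.degree v ≤ 8) ∨
      9 ≤ G.degree v := by omega
  · refine (sum_transfer_le_degree_mul (transfer_le_of_degree_eq_six h6)).trans ?_
    rw [h6]; norm_num
  · refine (sum_transfer_le_degree_mul (transfer_le_of_seven_le_degree_le_eight h7 h8)).trans ?_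
    have : (7 : ℚ) ≤ G.degree v := by exact_mod_cast h7
    linarith
  · refine (sum_transfer_le_degree_mul (transfer_le_two_thirds v)).trans ?_
    have : (9 : ℚ) ≤ G.degree v := by exact_mod_cast h9
    linarith

end Discharging

/-- If `G` is a graph with `mad(G) < 3`, `δ(G) ≥ 2`, and `Δ(G) ≥ 9`, then `G` contains
one of the configurations (RC1)–(RC5). -/
theorem structure_madLT_three {V : Type*} [Fintype V] (G : SimpleGraph V)
    [DecidableRel G.Adj] (hmad : MadLT G 3) (hδ : 2 ≤ G.minDegree) (hΔ : 9 ≤ G.maxDegree) :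
    ConfigRC1 G ∨ ConfigRC2 G ∨ ConfigRC3 G ∨ ConfigRC4 G ∨ ConfigRC5 G := by
  classical
  by_contra! h
  obtain ⟨hR1, hR2, hR3, hR4, hR5⟩ := h
  have : Nonempty V := not_isEmpty_iff.1 fun _ => by simp at hΔ
  have hcharge (v : V) : 0 ≤ finalCharge G v := by
    have := hδ.trans (G.minDegree_le_degree v)
    obtain h | h | h | h | h : G.degree v = 2 ∨ G.degree v = 3 ∨ G.degree v = 4 ∨
        G.degree v = 5 ∨ 6 ≤ G.degree v := by omega
    · exact finalCharge_nonneg_of_degree_eq_two hR1 hΔ h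
    · exact finalCharge_nonneg_of_degree_eq_three hR2 hR3 h
    · exact finalCharge_nonneg_of_degree_eq_four hR4 h
    · exact finalCharge_nonneg_of_degree_eq_five hR5 h
    · exact finalCharge_nonneg_of_six_le_degree h
  have hneg := sum_degree_sub_three_neg G hmad
  rw [← sum_finalCharge] at hneg
  exact hneg.not_ge (sum_nonneg fun v _ => hcharge v)
end

section
/- The complete bipartite graph K_{2,3} satisfies lc(K_{2,3}) = 4, which exceeds ⌈Δ(K_{2,3})/2⌉ + 1 = 3, and mad(K_{2,3}) = 12/5. -/
open SimpleGraph Finset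

noncomputable instance : DecidableRel (completeBipartiteGraph (Fin 2) (Fin 3)).Adj :=
  Classical.decRel _

/-!
Colour the left vertices of `K_{2,3}` with `0, 1` and the right ones with `2, 3, 2`. Since the
left colours are distinct and avoid the right ones, every bichromatic subgraph is a star centred
at a left vertex, and since no colour occurs three times on the right, no vertex has three
neighbours in one of them; so four colours suffice. Three do not: if both left vertices share a
colour, two right vertices sharing a colour would close a bichromatic 4-cycle, so the right side
needs three more colours; otherwise the right side avoids both left colours and is not
monochromatic, as a left vertex would then have degree three in a bichromatic subgraph.

A subgraph of `K_{m,n}` with `a ≤ m` left and `b ≤ n` right vertices has at most `ab` edges, and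
the average degree `2ab/(a+b)` of `K_{a,b}` is monotone in `a` and `b`, so
`mad(K_{m,n}) = 2mn/(m+n)`.
-/

theorem mul_mul_add_le_mul_mul_add {K : Type*} [CommSemiring K] [PartialOrder K]
    [IsOrderedRing K] {a b m n : K} (ha₀ : 0 ≤ a) (hb₀ : 0 ≤ b) (ha : a ≤ m) (hb : b ≤ n) :
    a * b * (m + n) ≤ m * n * (a + b) :=
  calc a * b * (m + n) = a * m * b + b * n * a := by ring
    _ ≤ a * m * n + b * n * m :=
      add_le_add (mul_le_mul_of_nonneg_left hb (mul_nonneg ha₀ (ha₀.trans ha)))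
        (mul_le_mul_of_nonneg_left ha (mul_nonneg hb₀ (hb₀.trans hb)))
    _ = m * n * (a + b) := by ring

theorem four_le_card_of_pairwise_ne {α : Type*} [Fintype α] {a b c d : α} (hab : a ≠ b)
    (hac : a ≠ c) (had : a ≠ d) (hbc : b ≠ c) (hbd : b ≠ d) (hcd : c ≠ d) :
    4 ≤ Fintype.card α := by
  classical
  exact (Finset.card_eq_four.2 ⟨a, b, c, d, hab, hac, had, hbc, hbd, hcd, rfl⟩).symm.le.trans
    (Finset.card_le_univ _)

namespace SimpleGraph

variable {V W α : Type*}

theorem not_isAcyclic_pairGraph_of_four_cycle {G : SimpleGraph V} {c : V → α}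
    {x₁ x₂ y₁ y₂ : V} (hx : x₁ ≠ x₂) (hy : y₁ ≠ y₂) (h₁₁ : G.Adj x₁ y₁) (h₂₁ : G.Adj x₂ y₁)
    (h₂₂ : G.Adj x₂ y₂) (h₁₂ : G.Adj x₁ y₂) (hcx : c x₁ = c x₂) (hcy : c y₁ = c y₂) :
    ¬ (pairGraph G c (c x₁) (c y₁)).IsAcyclic := by
  intro hac
  let P := pairGraph G c (c x₁) (c y₁)
  have e₁ : P.Adj x₁ y₁ := ⟨h₁₁, .inl rfl, .inr rfl⟩
  have e₂ : P.Adj y₁ x₂ := ⟨h₂₁.symm, .inr rfl, .inl hcx.symm⟩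
  have e₃ : P.Adj x₂ y₂ := ⟨h₂₂, .inl hcx.symm, .inr hcy.symm⟩
  have e₄ : P.Adj y₂ x₁ := ⟨h₁₂.symm, .inr hcy.symm, .inl rfl⟩
  refine hac (.cons e₁ (.cons e₂ (.cons e₃ (.cons e₄ .nil)))) ?_
  simp [Walk.isCycle_def, Walk.isTrail_def, hx, hx.symm, hy, h₁₁.ne, h₁₁.symm.ne, h₂₁.symm.ne,
    h₂₂.ne, h₁₂.symm.ne]

theorem maxDegLE2_pairGraph {G : SimpleGraph V} {c : V → α}
    (hc : ∀ ⦃x y⦄, G.Adj x y → c x ≠ c y)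
    (h : ∀ v x y z, G.Adj v x → G.Adj v y → G.Adj v z → c x = c y → c x = c z →
      x = y ∨ x = z ∨ y = z) (a b : α) :
    MaxDegLE2 (pairGraph G c a b) := by
  rintro v x y z ⟨hvx, hv, hx⟩ ⟨hvy, -, hy⟩ ⟨hvz, -, hz⟩
  exact h v x y z hvx hvy hvz (by grind [hc hvx, hc hvy]) (by grind [hc hvx, hc hvz])

theorem isLinearColoring_completeBipartiteGraph {c : V ⊕ W → α}
    (hV : Function.Injective (c ∘ Sum.inl)) (hVW : ∀ v w, c (.inl v) ≠ c (.inr w))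
    (hW : ∀ w₁ w₂ w₃, c (.inr w₁) = c (.inr w₂) → c (.inr w₁) = c (.inr w₃) →
      w₁ = w₂ ∨ w₁ = w₃ ∨ w₂ = w₃) :
    IsLinearColoring (completeBipartiteGraph V W) c := by
  have hproper : ∀ ⦃x y⦄, (completeBipartiteGraph V W).Adj x y → c x ≠ c y := by
    rintro (v | w) (v' | w') h <;> simp at h
    exacts [hVW v w', (hVW v' w).symm]
  refine ⟨hproper, fun a b => ⟨?_, maxDegLE2_pairGraph hproper ?_ a b⟩⟩
  · by_cases hcentre : ∃ v, c (.inl v) = a ∨ c (.inl v) = b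
    · obtain ⟨v, hv⟩ := hcentre
      refine (isAcyclic_starGraph (.inl v)).anti fun x y hxy => starGraph_adj.2 ⟨hxy.ne, ?_⟩
      obtain ⟨hxy, hx, hy⟩ := hxy
      have same_centre : ∀ v' w, (c (.inl v') = a ∨ c (.inl v') = b) →
          (c (.inr w) = a ∨ c (.inr w) = b) → v' = v := fun v' w hv' hw =>
        hV (show c (.inl v') = c (.inl v) by grind [hVW v' w, hVW v w])
      rcases x with v' | w <;> rcases y with v'' | w' <;> simp at hxy
      · exact .inl (congrArg _ (same_centre v' w' hx hy))
      · exact .inr (congrArg _ (same_centre v'' w hy hx))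
    · refine isAcyclic_bot.anti fun x y hxy => ?_
      obtain ⟨hxy, hx, hy⟩ := hxy
      rcases x with v | w <;> rcases y with v' | w' <;> simp at hxy
      exacts [hcentre ⟨v, hx⟩, hcentre ⟨v', hy⟩]
  · rintro (v | w) (v₁ | w₁) (v₂ | w₂) (v₃ | w₃) h₁ h₂ h₃ h₁₂ h₁₃ <;> simp at h₁ h₂ h₃
    · simpa using hW w₁ w₂ w₃ h₁₂ h₁₃
    · simp [hV h₁₂]

section Degree

variable [Fintype V] [Fintype W] [DecidableRel (completeBipartiteGraph V W).Adj]

theorem completeBipartiteGraph_degree_inl (v : V) :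
    (completeBipartiteGraph V W).degree (.inl v) = Fintype.card W := by
  classical
  rw [← card_neighborFinset_eq_degree,
    show (completeBipartiteGraph V W).neighborFinset (.inl v) = univ.map .inr by
      ext (_ | _) <;> simp]
  simp

theorem completeBipartiteGraph_degree_inr (w : W) :
    (completeBipartiteGraph V W).degree (.inr w) = Fintype.card V := by
  classical
  rw [← card_neighborFinset_eq_degree,
    show (completeBipartiteGraph V W).neighborFinset (.inr w) = univ.map .inl by
      ext (_ | _) <;> simp]
  simp

theorem maxDegree_completeBipartiteGraph [Nonempty V] [Nonempty W] :
    (completeBipartiteGraph V W).maxDegree = max (Fintype.card V) (Fintype.card W) := by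
  refine le_antisymm (maxDegree_le_of_forall_degree_le _ _ ?_) (max_le ?_ ?_)
  · rintro (v | w) <;>
      simp [completeBipartiteGraph_degree_inl, completeBipartiteGraph_degree_inr]
  · exact completeBipartiteGraph_degree_inr (V := V) (Classical.arbitrary W) ▸
      degree_le_maxDegree _ _
  · exact completeBipartiteGraph_degree_inl (W := W) (Classical.arbitrary V) ▸
      degree_le_maxDegree _ _

end Degree

theorem ncard_eq_ncard_preimage_inl_add_ncard_preimage_inr [Finite V] [Finite W]
    (s : Set (V ⊕ W)) : s.ncard = (Sum.inl ⁻¹' s).ncard + (Sum.inr ⁻¹' s).ncard := by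
  conv_lhs => rw [← Set.image_preimage_inl_union_image_preimage_inr s]
  rw [Set.ncard_union_eq Set.disjoint_image_inl_image_inr, Set.ncard_image_of_injective _
    Sum.inl_injective, Set.ncard_image_of_injective _ Sum.inr_injective]

theorem Subgraph.ncard_edgeSet_le_of_completeBipartiteGraph [Finite V] [Finite W]
    (H : (completeBipartiteGraph V W).Subgraph) :
    H.edgeSet.ncard ≤ (Sum.inl ⁻¹' H.verts).ncard * (Sum.inr ⁻¹' H.verts).ncard := by
  have hbip : H.spanningCoe.IsBipartiteWith (Sum.inl '' (Sum.inl ⁻¹' H.verts))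
      (Sum.inr '' (Sum.inr ⁻¹' H.verts)) := by
    refine ⟨Set.disjoint_image_inl_image_inr, fun x y hxy => ?_⟩
    have hx := H.edge_vert hxy
    have hy := H.edge_vert hxy.symm
    have hG := hxy.adj_sub
    rcases x with v | w <;> rcases y with v' | w' <;> simp_all
  have hE := hbip.encard_edgeSet_le
  rw [Subgraph.edgeSet_spanningCoe, Sum.inl_injective.encard_image,
    Sum.inr_injective.encard_image, ← (Set.toFinite H.edgeSet).cast_ncard_eq,
    ← (Set.toFinite (Sum.inl ⁻¹' H.verts)).cast_ncard_eq,
    ← (Set.toFinite (Sum.inr ⁻¹' H.verts)).cast_ncard_eq] at hE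
  exact_mod_cast hE

theorem madEq_completeBipartiteGraph [Fintype V] [Fintype W] [Nonempty (V ⊕ W)] :
    MadEq (completeBipartiteGraph V W)
      (2 * Fintype.card V * Fintype.card W / (Fintype.card V + Fintype.card W)) := by
  have hpos : (0 : ℚ) < Fintype.card V + Fintype.card W := by
    exact_mod_cast Fintype.card_sum (α := V) (β := W) ▸ Fintype.card_pos
  refine ⟨fun H _ => ?_, ⊤, ⟨Classical.arbitrary _, trivial⟩, ?_⟩
  · obtain ⟨a, b, hE, hverts, ha, hb⟩ : ∃ a b : ℕ, H.edgeSet.ncard ≤ a * b ∧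
        H.verts.ncard = a + b ∧ a ≤ Fintype.card V ∧ b ≤ Fintype.card W :=
      ⟨_, _, H.ncard_edgeSet_le_of_completeBipartiteGraph,
        ncard_eq_ncard_preimage_inl_add_ncard_preimage_inr H.verts,
        (Set.ncard_le_card _).trans_eq Nat.card_eq_fintype_card,
        (Set.ncard_le_card _).trans_eq Nat.card_eq_fintype_card⟩
    have hE' : (H.edgeSet.ncard : ℚ) ≤ a * b := by exact_mod_cast hE
    have hmono := mul_mul_add_le_mul_mul_add (a.cast_nonneg' (α := ℚ)) b.cast_nonneg'
      (Nat.cast_le.2 ha) (Nat.cast_le.2 hb)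
    rw [div_mul_eq_mul_div, le_div_iff₀ hpos, hverts]
    push_cast
    nlinarith
  · have hE : (completeBipartiteGraph V W).edgeSet.ncard = Fintype.card V * Fintype.card W := by
      have := encard_edgeSet_completeBipartiteGraph (W₁ := V) (W₂ := W)
      rw [← (Set.toFinite _).cast_ncard_eq, ENat.card_eq_coe_fintype_card,
        ENat.card_eq_coe_fintype_card] at this
      exact_mod_cast this
    rw [Subgraph.edgeSet_top, Subgraph.verts_top, Set.ncard_univ, Nat.card_eq_fintype_card,
      Fintype.card_sum, hE]
    push_cast
    field_simp

end SimpleGraph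

theorem four_le_card_of_isLinearColoring_K23 {α : Type*} [Fintype α] {c : Fin 2 ⊕ Fin 3 → α}
    (hc : IsLinearColoring (completeBipartiteGraph (Fin 2) (Fin 3)) c) :
    4 ≤ Fintype.card α := by
  obtain ⟨hproper, hpair⟩ := hc
  have hLR : ∀ i j, c (.inl i) ≠ c (.inr j) := fun i j => hproper (by simp)
  by_cases h01 : c (.inl 0) = c (.inl 1)
  · have hR : ∀ j k, j ≠ k → c (.inr j) ≠ c (.inr k) := fun j k hjk hsame =>
      not_isAcyclic_pairGraph_of_four_cycle (x₁ := .inl 0) (x₂ := .inl 1) (by simp)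
        (Sum.inr_injective.ne hjk) (by simp) (by simp) (by simp) (by simp) h01 hsame
        (hpair _ _).1
    exact four_le_card_of_pairwise_ne (hLR 0 0) (hLR 0 1) (hLR 0 2) (hR 0 1 (by decide))
      (hR 0 2 (by decide)) (hR 1 2 (by decide))
  · obtain ⟨j, hj⟩ : ∃ j, c (.inr j) ≠ c (.inr 0) := by
      by_contra! h
      have := (hpair (c (.inl 0)) (c (.inr 0))).2 (.inl 0) (.inr 0) (.inr 1) (.inr 2)
        ⟨by simp, .inl rfl, .inr rfl⟩ ⟨by simp, .inl rfl, .inr (h 1)⟩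
        ⟨by simp, .inl rfl, .inr (h 2)⟩
      simp at this
    exact four_le_card_of_pairwise_ne h01 (hLR 0 0) (hLR 0 j) (hLR 1 0) (hLR 1 j) hj.symm

theorem isLinearColoring_K23 :
    IsLinearColoring (completeBipartiteGraph (Fin 2) (Fin 3))
      (Sum.elim ![0, 1] ![2, 3, 2] : Fin 2 ⊕ Fin 3 → Fin 4) :=
  isLinearColoring_completeBipartiteGraph (by decide) (by decide) (by decide)

/-- `K_{2,3}` satisfies `lc(K_{2,3}) = 4`, which exceeds `⌈Δ(K_{2,3})/2⌉ + 1 = 3`,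
and `mad(K_{2,3}) = 12/5`. -/
theorem K23_linChromNum_and_mad :
    linChromNum (completeBipartiteGraph (Fin 2) (Fin 3)) = 4 ∧
    ((completeBipartiteGraph (Fin 2) (Fin 3)).maxDegree + 1) / 2 + 1 = 3 ∧
    MadEq (completeBipartiteGraph (Fin 2) (Fin 3)) (12 / 5) := by
  refine ⟨?_, ?_, ?_⟩
  · refine le_antisymm (Nat.sInf_le ⟨_, isLinearColoring_K23⟩)
      (le_csInf ⟨4, _, isLinearColoring_K23⟩ ?_)
    rintro n ⟨c, hc⟩
    simpa using four_le_card_of_isLinearColoring_K23 hc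
  · simp [maxDegree_completeBipartiteGraph]
  · convert madEq_completeBipartiteGraph (V := Fin 2) (W := Fin 3) using 1
    norm_num
end
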